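/- arXiv:math/0701698 — 4 statements merged into one kernel-verified Lean document; each statement's English description precedes it below -/
import Mathlib

section
/- Let N be a positive integer and x a natural number with x ≤ N/2. Then |log(N! / ((N-x)! · N^x)) + x(x-1)/(2N)| ≤ x^3/N^2. -/
open Finset

lemma log_one_sub_lb {t : ℝ} (ht : 0 ≤ t) (ht2 : t ≤ 1/2) :
    -t - t^2 ≤ Real.log (1 - t) := by
  have h1 : (0:ℝ) < 1 - t := by linarith
  rw [Real.le_log_iff_exp_le h1]
  have hu : 0 ≤ t + t^2 := by nlinarith
  have hq : 1 + (t + t^2) + (t + t^2)^2 / 2 ≤ Real.exp (t + t^2) :=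
    Real.quadratic_le_exp_of_nonneg hu
  have heq : Real.exp (-t - t^2) = 1 / Real.exp (t + t^2) := by
    rw [one_div, ← Real.exp_neg]; congr 1; ring
  rw [heq, div_le_iff₀ (Real.exp_pos _)]
  nlinarith [Real.exp_pos (t + t^2)]

lemma log_one_sub_ub {t : ℝ} (ht : t < 1) : Real.log (1 - t) ≤ -t := by
  have := Real.log_le_sub_one_of_pos (x := 1 - t) (by linarith)
  linarith

lemma sum_range_id_real (x : ℕ) :
    ∑ i ∈ range x, (i : ℝ) = (x : ℝ) * ((x : ℝ) - 1) / 2 := by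
  induction x with
  | zero => simp
  | succ n ih => rw [Finset.sum_range_succ, ih]; push_cast; ring

/-- Falling-factorial ratio estimate: `log(N!/((N-x)! Nˣ)) = -x(x-1)/(2N) + O(x³/N²)`
for `x ≤ N/2`. -/
theorem falling_factorial_log_estimate (N : ℕ) (hN : 0 < N) (x : ℕ) (hx : 2 * x ≤ N) :
    |Real.log ((Nat.factorial N : ℝ) / ((Nat.factorial (N - x) : ℝ) * (N : ℝ) ^ x))
        + (x : ℝ) * ((x : ℝ) - 1) / (2 * N)| ≤ (x : ℝ) ^ 3 / (N : ℝ) ^ 2 := by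
  have hNR : (0:ℝ) < N := by exact_mod_cast hN
  have hxN : x ≤ N := by omega
  -- rewrite the ratio as a product
  have hfac : (Nat.factorial N : ℝ) =
      (Nat.factorial (N - x) : ℝ) * (N.descFactorial x : ℝ) := by
    rw [← Nat.cast_mul, Nat.factorial_mul_descFactorial hxN]
  have hprod : (Nat.factorial N : ℝ) / ((Nat.factorial (N - x) : ℝ) * (N : ℝ) ^ x)
      = ∏ j ∈ range x, (1 - (j : ℝ) / N) := by
    rw [hfac, mul_div_mul_left _ _ (by positivity : ((Nat.factorial (N-x) : ℝ)) ≠ 0)]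
    rw [Nat.descFactorial_eq_prod_range]
    rw [show ((N:ℝ))^x = ∏ _j ∈ range x, (N:ℝ) by
      rw [Finset.prod_const, Finset.card_range]]
    push_cast
    rw [← Finset.prod_div_distrib]
    apply Finset.prod_congr rfl
    intro j hj
    have hj' : j ≤ N := by simp at hj; omega
    rw [Nat.cast_sub hj']
    field_simp
  rw [hprod]
  -- bound each term
  have hterm : ∀ j ∈ range x, (0:ℝ) ≤ (j:ℝ)/N ∧ (j:ℝ)/N ≤ 1/2 := by
    intro j hj
    simp only [Finset.mem_range] at hj
    constructor
    · positivity
    · rw [div_le_iff₀ hNR]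
      have h2j : (2 * j : ℕ) ≤ N := by omega
      have h2j' : ((2 * j : ℕ) : ℝ) ≤ (N : ℝ) := by exact_mod_cast h2j
      push_cast at h2j'
      linarith
  have hpos : ∀ j ∈ range x, (0:ℝ) < 1 - (j:ℝ)/N := by
    intro j hj
    obtain ⟨_, h2⟩ := hterm j hj
    linarith
  have hlog : Real.log (∏ j ∈ range x, (1 - (j : ℝ) / N))
      = ∑ j ∈ range x, Real.log (1 - (j : ℝ) / N) := by
    apply Real.log_prod
    intro j hj
    exact ne_of_gt (hpos j hj)
  rw [hlog]
  set A : ℝ := (x : ℝ) * ((x : ℝ) - 1) / (2 * N) with hA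
  have hsumub : ∑ j ∈ range x, Real.log (1 - (j : ℝ) / N) ≤ -A := by
    have h0 : ∑ j ∈ range x, Real.log (1 - (j : ℝ) / N)
        ≤ ∑ j ∈ range x, -((j:ℝ)/N) := by
      apply Finset.sum_le_sum
      intro j hj
      obtain ⟨h1, h2⟩ := hterm j hj
      exact log_one_sub_ub (t := (j:ℝ)/N) (by linarith)
    calc _ ≤ ∑ j ∈ range x, -((j:ℝ)/N) := h0
      _ = -A := by
          rw [Finset.sum_neg_distrib, ← Finset.sum_div, sum_range_id_real, hA]
          field_simp
  have hsumlb : -A - (x:ℝ)^3/(N:ℝ)^2 ≤ ∑ j ∈ range x, Real.log (1 - (j : ℝ) / N) := by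
    have h1 : ∑ j ∈ range x, (-((j:ℝ)/N) - ((j:ℝ)/N)^2)
        ≤ ∑ j ∈ range x, Real.log (1 - (j : ℝ) / N) := by
      apply Finset.sum_le_sum
      intro j hj
      obtain ⟨ha, hb⟩ := hterm j hj
      exact log_one_sub_lb ha hb
    have h2 : ∑ j ∈ range x, ((j:ℝ)/N)^2 ≤ (x:ℝ)^3/(N:ℝ)^2 := by
      calc ∑ j ∈ range x, ((j:ℝ)/N)^2
          ≤ ∑ _j ∈ range x, ((x:ℝ)/N)^2 := by
            apply Finset.sum_le_sum
            intro j hj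
            simp only [Finset.mem_range] at hj
            have hjx : (j:ℝ) ≤ x := by exact_mod_cast hj.le
            gcongr
        _ = (x:ℝ) * ((x:ℝ)/N)^2 := by rw [Finset.sum_const, Finset.card_range]; ring
        _ = (x:ℝ)^3/(N:ℝ)^2 := by field_simp
    have h3 : ∑ j ∈ range x, -((j:ℝ)/N) = -A := by
      rw [Finset.sum_neg_distrib, ← Finset.sum_div, sum_range_id_real, hA]
      field_simp
    have h4 : ∑ j ∈ range x, (-((j:ℝ)/N) - ((j:ℝ)/N)^2)
        = (∑ j ∈ range x, -((j:ℝ)/N)) - ∑ j ∈ range x, ((j:ℝ)/N)^2 := by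
      rw [← Finset.sum_sub_distrib]
    rw [h4, h3] at h1
    linarith
  rw [abs_le]
  constructor <;> linarith
end

section
/- Let (Ω, F, P) be a probability space, X_n, X random variables valued in a metric space 𝒳, and L_n, L nonnegative real random variables on Ω with E_P[L_n] = E_P[L] = 1 for all n. Let Q_n and Q be the probability measures with densities L_n and L relative to P. If the pairs (X_n, L_n) converge in distribution (under P) to (X, L) as n → ∞, then for every bounded continuous f : 𝒳 → ℝ, E_{Q_n}[f(X_n)] → E_Q[f(X)]. -/
/-!
Under `Qₙ` the expectation of `f (Xₙ)` is `E_P[Lₙ f(Xₙ)]`, whose integrand is not bounded in `Lₙ`,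
so the convergence in distribution of `(Xₙ, Lₙ)` does not apply to it directly. Truncating `Lₙ`
at level `M` gives a bounded continuous test function, and since `Lₙ ≥ 0` the truncation error is
at most `‖f‖ (E Lₙ - E (Lₙ ∧ M))`. Testing against `t ↦ t ∧ M` as well, this bound converges as
`n → ∞` to `‖f‖ (E L - E (L ∧ M))`, which tends to `0` as `M → ∞` by dominated convergence.
-/

open MeasureTheory Filter Topology BoundedContinuousFunction

theorem tendsto_of_eventually_dist_le_of_tendsto {ι κ α : Type*} [PseudoMetricSpace α]
    {l : Filter ι} {l' : Filter κ} [l'.NeBot] {a : ι → α} {a' : α} {b : κ → ι → α} {b' : κ → α}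
    {e : κ → ι → ℝ} {e' : κ → ℝ}
    (hb : ∀ k, Tendsto (b k) l (𝓝 (b' k))) (he : ∀ k, Tendsto (e k) l (𝓝 (e' k)))
    (he' : Tendsto e' l' (𝓝 0)) (hab : ∀ᶠ k in l', ∀ᶠ i in l, dist (a i) (b k i) ≤ e k i)
    (hab' : ∀ᶠ k in l', dist (b' k) a' ≤ e' k) :
    Tendsto a l (𝓝 a') := by
  refine Metric.tendsto_nhds.2 fun ε hε => ?_
  obtain ⟨k, hk, hk', hsmall⟩ :=
    (hab.and (hab'.and (he'.eventually (gt_mem_nhds (by positivity : 0 < ε / 3))))).exists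
  filter_upwards [hk, (he k).eventually (gt_mem_nhds hsmall),
    Metric.tendsto_nhds.1 (hb k) (ε / 3) (by positivity)] with i hi hei hbi
  calc dist (a i) a' ≤ dist (a i) (b k i) + dist (b k i) (b' k) + dist (b' k) a' :=
        dist_triangle4 _ _ _ _
    _ < ε := by linarith

theorem abs_min_le_abs_left {t M : ℝ} (hM : 0 ≤ M) : |min t M| ≤ |t| := by
  rcases le_total t M with h | h
  · rw [min_eq_left h]
  · rw [min_eq_right h, abs_of_nonneg hM]
    exact h.trans (le_abs_self _)

section Integrals

variable {Ω : Type*} [MeasurableSpace Ω] {μ : Measure Ω}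

theorem integral_withDensity_ofReal_eq_integral_smul {E : Type*} [NormedAddCommGroup E]
    [NormedSpace ℝ E] {ρ : Ω → ℝ} (hρ : AEMeasurable ρ μ) (hρ0 : 0 ≤ᵐ[μ] ρ) (g : Ω → E) :
    ∫ ω, g ω ∂μ.withDensity (fun ω => ENNReal.ofReal (ρ ω)) = ∫ ω, ρ ω • g ω ∂μ := by
  rw [integral_withDensity_eq_integral_toReal_smul₀ hρ.ennreal_ofReal
    (ae_of_all _ fun _ => ENNReal.ofReal_lt_top)]
  refine integral_congr_ae ?_
  filter_upwards [hρ0] with ω hω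
  rw [ENNReal.toReal_ofReal hω]

theorem MeasureTheory.Integrable.min_const {Λ : Ω → ℝ} (hΛ : Integrable Λ μ) {M : ℝ}
    (hM : 0 ≤ M) : Integrable (fun ω => min (Λ ω) M) μ :=
  hΛ.mono (hΛ.aestronglyMeasurable.inf aestronglyMeasurable_const)
    (ae_of_all _ fun _ => abs_min_le_abs_left hM)

theorem dist_integral_mul_integral_min_mul_le {φ Λ : Ω → ℝ} {C M : ℝ}
    (hφ : AEStronglyMeasurable φ μ) (hφC : ∀ᵐ ω ∂μ, ‖φ ω‖ ≤ C) (hΛ : Integrable Λ μ)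
    (hM : 0 ≤ M) :
    dist (∫ ω, Λ ω * φ ω ∂μ) (∫ ω, min (Λ ω) M * φ ω ∂μ)
      ≤ (∫ ω, Λ ω ∂μ - ∫ ω, min (Λ ω) M ∂μ) * C := by
  have hmin := hΛ.min_const hM
  rw [dist_eq_norm, ← integral_sub (hΛ.mul_bdd hφ hφC) (hmin.mul_bdd hφ hφC),
    ← integral_sub hΛ hmin, ← integral_mul_const]
  refine norm_integral_le_of_norm_le ((hΛ.sub hmin).mul_const C) ?_
  filter_upwards [hφC] with ω hω
  rw [← sub_mul, norm_mul, Real.norm_of_nonneg (sub_nonneg.2 (min_le_left _ _))]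
  exact mul_le_mul_of_nonneg_left hω (sub_nonneg.2 (min_le_left _ _))

theorem tendsto_integral_min_atTop {Λ : Ω → ℝ} (hΛ : Integrable Λ μ) :
    Tendsto (fun M : ℝ => ∫ ω, min (Λ ω) M ∂μ) atTop (𝓝 (∫ ω, Λ ω ∂μ)) := by
  refine tendsto_integral_filter_of_dominated_convergence (fun ω => ‖Λ ω‖)
    (Eventually.of_forall fun M => hΛ.aestronglyMeasurable.inf aestronglyMeasurable_const)
    ((eventually_ge_atTop 0).mono fun M hM => ?_) hΛ.norm (ae_of_all _ fun ω => ?_)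
  · exact ae_of_all _ fun ω => abs_min_le_abs_left hM
  · exact tendsto_const_nhds.congr'
      ((eventually_ge_atTop (Λ ω)).mono fun M hM => (min_eq_left hM).symm)

end Integrals

namespace BoundedContinuousFunction

/-- The cut at `0` only serves to make `t ∧ M` bounded; it is invisible on nonnegative `t`. -/
def clamp (M : ℝ) : ℝ →ᵇ ℝ :=
  ofNormedAddCommGroup (fun t => min (max t 0) M)
    ((continuous_id.max continuous_const).min continuous_const) |M| fun t => by
      rcases le_total 0 M with hM | hM
      · rw [Real.norm_of_nonneg (le_min (le_max_right _ _) hM), abs_of_nonneg hM]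
        exact min_le_right _ _
      · rw [min_eq_right (hM.trans (le_max_right _ _)), Real.norm_eq_abs]

theorem clamp_apply_of_nonneg (M : ℝ) {t : ℝ} (ht : 0 ≤ t) : clamp M t = min t M := by
  simp [clamp, max_eq_left ht]

end BoundedContinuousFunction

theorem tendsto_integral_mul_of_tendsto_integral_boundedContinuous
    {ι Ω 𝒳 : Type*} [MeasurableSpace Ω] [TopologicalSpace 𝒳] [MeasurableSpace 𝒳]
    [OpensMeasurableSpace 𝒳] {l : Filter ι} {μ : Measure Ω}
    {Y : ι → Ω → 𝒳} {Y' : Ω → 𝒳} {Λ : ι → Ω → ℝ} {Λ' : Ω → ℝ}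
    (hY : ∀ i, AEMeasurable (Y i) μ) (hY' : AEMeasurable Y' μ)
    (hΛ : ∀ i, Integrable (Λ i) μ) (hΛ' : Integrable Λ' μ)
    (hΛ0 : ∀ i, 0 ≤ᵐ[μ] Λ i) (hΛ'0 : 0 ≤ᵐ[μ] Λ')
    (hmean : Tendsto (fun i => ∫ ω, Λ i ω ∂μ) l (𝓝 (∫ ω, Λ' ω ∂μ)))
    (hconv : ∀ g : 𝒳 × ℝ →ᵇ ℝ,
      Tendsto (fun i => ∫ ω, g (Y i ω, Λ i ω) ∂μ) l (𝓝 (∫ ω, g (Y' ω, Λ' ω) ∂μ)))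
    (f : 𝒳 →ᵇ ℝ) :
    Tendsto (fun i => ∫ ω, Λ i ω * f (Y i ω) ∂μ) l (𝓝 (∫ ω, Λ' ω * f (Y' ω) ∂μ)) := by
  have hclamp {Z : Ω → ℝ} (hZ : 0 ≤ᵐ[μ] Z) (F : Ω → ℝ → ℝ) (M : ℝ) :
      ∫ ω, F ω (min (Z ω) M) ∂μ = ∫ ω, F ω (clamp M (Z ω)) ∂μ :=
    integral_congr_ae (hZ.mono fun ω hω => by simp only [clamp_apply_of_nonneg M hω])
  have htrunc (M : ℝ) : Tendsto (fun i => ∫ ω, min (Λ i ω) M * f (Y i ω) ∂μ) l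
      (𝓝 (∫ ω, min (Λ' ω) M * f (Y' ω) ∂μ)) := by
    rw [hclamp hΛ'0 (fun ω t => t * f (Y' ω))]
    exact (hconv ((clamp M).compContinuous ContinuousMap.snd *
      f.compContinuous ContinuousMap.fst)).congr fun i =>
        (hclamp (hΛ0 i) (fun ω t => t * f (Y i ω)) M).symm
  have hmeanTrunc (M : ℝ) : Tendsto (fun i => ∫ ω, min (Λ i ω) M ∂μ) l
      (𝓝 (∫ ω, min (Λ' ω) M ∂μ)) := by
    rw [hclamp hΛ'0 fun _ t => t]
    exact (hconv ((clamp M).compContinuous ContinuousMap.snd)).congr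
      fun i => (hclamp (hΛ0 i) (fun _ t => t) M).symm
  have hf {Z : Ω → 𝒳} (hZ : AEMeasurable Z μ) : AEStronglyMeasurable (fun ω => f (Z ω)) μ :=
    (f.continuous.measurable.comp_aemeasurable hZ).aestronglyMeasurable
  have hfC (Z : Ω → 𝒳) : ∀ᵐ ω ∂μ, ‖f (Z ω)‖ ≤ ‖f‖ := ae_of_all _ fun _ => f.norm_coe_le_norm _
  refine tendsto_of_eventually_dist_le_of_tendsto (l' := atTop) htrunc
    (fun M => (hmean.sub (hmeanTrunc M)).mul_const ‖f‖)
    (by simpa using ((tendsto_integral_min_atTop hΛ').const_sub (∫ ω, Λ' ω ∂μ)).mul_const ‖f‖)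
    ((eventually_ge_atTop 0).mono fun M hM => Eventually.of_forall fun i =>
      dist_integral_mul_integral_min_mul_le (hf (hY i)) (hfC _) (hΛ i) hM)
    ((eventually_ge_atTop 0).mono fun M hM => ?_)
  rw [dist_comm]
  exact dist_integral_mul_integral_min_mul_le (hf hY') (hfC _) hΛ' hM

theorem change_of_measure_weak_convergence_general
    {Ω : Type*} [MeasurableSpace Ω] (P : Measure Ω)
    {𝒳 : Type*} [MetricSpace 𝒳] [MeasurableSpace 𝒳] [BorelSpace 𝒳]
    (X : ℕ → Ω → 𝒳) (X' : Ω → 𝒳) (L : ℕ → Ω → ℝ) (L' : Ω → ℝ)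
    (hXm : ∀ n, Measurable (X n)) (hX'm : Measurable X')
    (hLnn : ∀ n ω, 0 ≤ L n ω) (hL'nn : ∀ ω, 0 ≤ L' ω)
    (hLmean : ∀ n, ∫ ω, L n ω ∂P = 1) (hL'mean : ∫ ω, L' ω ∂P = 1)
    (hconv : ∀ g : BoundedContinuousFunction (𝒳 × ℝ) ℝ,
      Tendsto (fun n => ∫ ω, g (X n ω, L n ω) ∂P) atTop (nhds (∫ ω, g (X' ω, L' ω) ∂P))) :
    ∀ f : BoundedContinuousFunction 𝒳 ℝ,
      Tendsto
        (fun n => ∫ ω, f (X n ω) ∂(P.withDensity fun ω => ENNReal.ofReal (L n ω)))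
        atTop
        (nhds (∫ ω, f (X' ω) ∂(P.withDensity fun ω => ENNReal.ofReal (L' ω)))) := by
  intro f
  have hL n : Integrable (L n) P := integrable_of_integral_eq_one (hLmean n)
  have hL' : Integrable L' P := integrable_of_integral_eq_one hL'mean
  simp only [integral_withDensity_ofReal_eq_integral_smul (hL _).aemeasurable
    (ae_of_all _ (hLnn _)), integral_withDensity_ofReal_eq_integral_smul hL'.aemeasurable
    (ae_of_all _ hL'nn), smul_eq_mul]
  exact tendsto_integral_mul_of_tendsto_integral_boundedContinuous
    (fun n => (hXm n).aemeasurable) hX'm.aemeasurable hL hL' (fun n => ae_of_all _ (hLnn n))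
    (ae_of_all _ hL'nn) (by simp only [hLmean, hL'mean, tendsto_const_nhds]) hconv f

/-- Change-of-measure weak convergence transfer principle: if `(Xₙ, Lₙ) ⇒ (X, L)` under `P`,
with `Lₙ, L` nonnegative of mean one, then the `Qₙ`-distribution of `Xₙ` converges weakly to
the `Q`-distribution of `X`, where `dQₙ/dP = Lₙ`, `dQ/dP = L`. -/
theorem change_of_measure_weak_convergence
    {Ω : Type*} [MeasurableSpace Ω] (P : Measure Ω) [IsProbabilityMeasure P]
    {𝒳 : Type*} [MetricSpace 𝒳] [MeasurableSpace 𝒳] [BorelSpace 𝒳]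
    (X : ℕ → Ω → 𝒳) (X' : Ω → 𝒳) (L : ℕ → Ω → ℝ) (L' : Ω → ℝ)
    (hXm : ∀ n, Measurable (X n)) (hX'm : Measurable X')
    (hLm : ∀ n, Measurable (L n)) (hL'm : Measurable L')
    (hLnn : ∀ n ω, 0 ≤ L n ω) (hL'nn : ∀ ω, 0 ≤ L' ω)
    (hLmean : ∀ n, ∫ ω, L n ω ∂P = 1) (hL'mean : ∫ ω, L' ω ∂P = 1)
    (hconv : ∀ g : BoundedContinuousFunction (𝒳 × ℝ) ℝ,
      Tendsto (fun n => ∫ ω, g (X n ω, L n ω) ∂P) atTop (nhds (∫ ω, g (X' ω, L' ω) ∂P))) :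
    ∀ f : BoundedContinuousFunction 𝒳 ℝ,
      Tendsto
        (fun n => ∫ ω, f (X n ω) ∂(P.withDensity fun ω => ENNReal.ofReal (L n ω)))
        atTop
        (nhds (∫ ω, f (X' ω) ∂(P.withDensity fun ω => ENNReal.ofReal (L' ω)))) :=
  change_of_measure_weak_convergence_general P X X' L L' hXm hX'm hLnn hL'nn hLmean hL'mean hconv
end

section
/- For every β > 0 there exists a constant C < ∞ such that for all integers n ≥ 1, all integers k with n/2 ≤ k < n, and all x ∈ ℤ: Σ_{y ∈ ℤ} exp(-β y^2 / k) · exp(-β (x-y)^2 / (n-k)) ≤ C·√(n-k)·exp(-β x^2 / (4n)). -/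
/-!
Since `x² ≤ 2y² + 2(x - y)²`, each term of the convolution is at most
`exp (-β x² / (4n))` times a Gaussian in `x - y` of width `n - k`. By Jacobi's theta
transformation, the sum of a Gaussian of width `m ≥ 1` over `ℤ` is `O(√m)`.
-/

open Real

lemma summable_exp_neg_mul_int_sq {c : ℝ} (hc : 0 < c) :
    Summable fun n : ℤ => exp (-c * (n : ℝ) ^ 2) := by
  have hgeom : Summable fun n : ℕ => exp (-c) ^ n :=
    summable_geometric_of_lt_one (exp_pos _).le (exp_lt_one_iff.mpr (neg_lt_zero.mpr hc))
  have hle : ∀ n : ℕ, exp (-c * (n : ℝ) ^ 2) ≤ exp (-c) ^ n := by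
    intro n
    rw [← exp_nat_mul, exp_le_exp]
    have : (n : ℝ) ≤ (n : ℝ) ^ 2 := by exact_mod_cast Nat.le_self_pow two_ne_zero n
    nlinarith
  refine .of_nat_of_neg (.of_nonneg_of_le (fun _ => (exp_pos _).le) hle hgeom)
    (.of_nonneg_of_le (fun _ => (exp_pos _).le) (fun n => ?_) hgeom)
  simpa only [Int.cast_neg, Int.cast_natCast, neg_sq] using hle n

lemma summable_exp_neg_mul_sub_int_sq {c : ℝ} (hc : 0 < c) (x : ℤ) :
    Summable fun y : ℤ => exp (-c * ((x : ℝ) - y) ^ 2) := by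
  simpa [Function.comp_def] using
    (Equiv.subLeft x).summable_iff.mpr (summable_exp_neg_mul_int_sq hc)

lemma tsum_exp_neg_mul_sub_int_sq (c : ℝ) (x : ℤ) :
    ∑' y : ℤ, exp (-c * ((x : ℝ) - y) ^ 2) = ∑' n : ℤ, exp (-c * (n : ℝ) ^ 2) := by
  rw [← (Equiv.subLeft x).tsum_eq]
  simp

-- Jacobi: the theta sum at `b / m` is `√(π m / b)` times the theta sum at `π² m / b`,
-- and the latter decreases in `m`.
lemma tsum_exp_neg_div_mul_int_sq_le {b m : ℝ} (hb : 0 < b) (hm : 1 ≤ m) :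
    ∑' n : ℤ, exp (-(b / m) * (n : ℝ) ^ 2)
      ≤ √(π / b) * (∑' n : ℤ, exp (-(π ^ 2 / b) * (n : ℝ) ^ 2)) * √m := by
  have hm0 : 0 < m := by linarith
  have ha : 0 < b / (π * m) := by positivity
  have hpoisson := tsum_exp_neg_mul_int_sq ha
  have hlhs : -π * (b / (π * m)) = -(b / m) := by field_simp
  have hrhs : -π / (b / (π * m)) = -(π ^ 2 * m / b) := by field_simp
  have hcoef : 1 / (b / (π * m)) ^ (1 / 2 : ℝ) = √(π / b) * √m := by
    rw [← sqrt_eq_rpow, one_div, ← sqrt_inv, ← sqrt_mul (by positivity)]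
    congr 1
    field_simp
  rw [hlhs, hrhs, hcoef] at hpoisson
  rw [hpoisson, mul_right_comm]
  gcongr √(π / b) * ?_ * √m
  refine Summable.tsum_le_tsum (fun n => ?_) (summable_exp_neg_mul_int_sq (by positivity))
    (summable_exp_neg_mul_int_sq (by positivity))
  gcongr
  nlinarith [pi_pos]

lemma sq_div_add_sq_div_le {K M N X Y : ℝ} (hK : 0 < K) (hM : 0 < M) (hKN : K ≤ 2 * N)
    (hMN : M ≤ N) :
    X ^ 2 / (4 * N) + (X - Y) ^ 2 / (2 * M) ≤ Y ^ 2 / K + (X - Y) ^ 2 / M := by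
  have hN : 0 < N := by linarith
  -- `2Y² + 2(X - Y)² - X² = (2Y - X)²`
  have hsplit : X ^ 2 / (4 * N) ≤ Y ^ 2 / (2 * N) + (X - Y) ^ 2 / (2 * N) := by
    rw [← add_div, div_le_div_iff₀ (by positivity) (by positivity)]
    nlinarith [mul_nonneg hN.le (sq_nonneg (2 * Y - X))]
  have hY : Y ^ 2 / (2 * N) ≤ Y ^ 2 / K := by gcongr
  have hXY : (X - Y) ^ 2 / (2 * N) ≤ (X - Y) ^ 2 / (2 * M) := by gcongr
  have hhalf : (X - Y) ^ 2 / (2 * M) + (X - Y) ^ 2 / (2 * M) = (X - Y) ^ 2 / M := by ring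
  linarith

lemma exp_neg_sq_div_mul_exp_neg_sq_div_le {β K M N : ℝ} (hβ : 0 ≤ β) (hK : 0 < K)
    (hM : 0 < M) (hKN : K ≤ 2 * N) (hMN : M ≤ N) (x y : ℝ) :
    exp (-β * y ^ 2 / K) * exp (-β * (x - y) ^ 2 / M)
      ≤ exp (-β * x ^ 2 / (4 * N)) * exp (-(β / 2 / M) * (x - y) ^ 2) := by
  rw [← exp_add, ← exp_add, exp_le_exp]
  calc -β * y ^ 2 / K + -β * (x - y) ^ 2 / M = -β * (y ^ 2 / K + (x - y) ^ 2 / M) := by ring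
    _ ≤ -β * (x ^ 2 / (4 * N) + (x - y) ^ 2 / (2 * M)) :=
      mul_le_mul_of_nonpos_left (sq_div_add_sq_div_le hK hM hKN hMN) (neg_nonpos.mpr hβ)
    _ = -β * x ^ 2 / (4 * N) + -(β / 2 / M) * (x - y) ^ 2 := by ring

theorem tsum_exp_neg_sq_div_mul_exp_neg_sub_sq_div_le {β K M N : ℝ} (hβ : 0 < β) (hK : 0 < K)
    (hM : 1 ≤ M) (hKN : K ≤ 2 * N) (hMN : M ≤ N) (x : ℤ) :
    ∑' y : ℤ, exp (-β * (y : ℝ) ^ 2 / K) * exp (-β * ((x : ℝ) - y) ^ 2 / M)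
      ≤ √(π / (β / 2)) * (∑' n : ℤ, exp (-(π ^ 2 / (β / 2)) * (n : ℝ) ^ 2)) * √M
        * exp (-β * (x : ℝ) ^ 2 / (4 * N)) := by
  have hM0 : 0 < M := by linarith
  have hterm := fun y : ℤ =>
    exp_neg_sq_div_mul_exp_neg_sq_div_le hβ.le hK hM0 hKN hMN (x : ℝ) y
  have hdom := (summable_exp_neg_mul_sub_int_sq (by positivity : 0 < β / 2 / M) x).mul_left
    (exp (-β * (x : ℝ) ^ 2 / (4 * N)))
  calc _ ≤ ∑' y : ℤ, exp (-β * (x : ℝ) ^ 2 / (4 * N)) * exp (-(β / 2 / M) * ((x : ℝ) - y) ^ 2) :=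
        Summable.tsum_le_tsum hterm (hdom.of_nonneg_of_le (fun _ => by positivity) hterm) hdom
    _ = exp (-β * (x : ℝ) ^ 2 / (4 * N)) * ∑' n : ℤ, exp (-(β / 2 / M) * (n : ℝ) ^ 2) := by
        rw [tsum_mul_left, tsum_exp_neg_mul_sub_int_sq]
    _ ≤ exp (-β * (x : ℝ) ^ 2 / (4 * N)) *
          (√(π / (β / 2)) * (∑' n : ℤ, exp (-(π ^ 2 / (β / 2)) * (n : ℝ) ^ 2)) * √M) := by
        gcongr
        exact tsum_exp_neg_div_mul_int_sq_le (by positivity) hM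
    _ = _ := by ring

/-- Discrete Gaussian convolution inequality:
`Σ_y exp(-βy²/k)·exp(-β(x-y)²/(n-k)) ≤ C √(n-k) exp(-βx²/(4n))` for `n/2 ≤ k < n`. -/
theorem discrete_gaussian_convolution_bound (β : ℝ) (hβ : 0 < β) :
    ∃ C : ℝ, ∀ n k : ℕ, 1 ≤ n → n ≤ 2 * k → k < n → ∀ x : ℤ,
      ∑' y : ℤ, Real.exp (-β * (y : ℝ) ^ 2 / k) * Real.exp (-β * ((x : ℝ) - y) ^ 2 / ((n : ℝ) - k))
        ≤ C * Real.sqrt ((n : ℝ) - k) * Real.exp (-β * (x : ℝ) ^ 2 / (4 * n)) := by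
  refine ⟨√(π / (β / 2)) * ∑' n : ℤ, exp (-(π ^ 2 / (β / 2)) * (n : ℝ) ^ 2),
    fun n k _ hnk hkn x => ?_⟩
  have hk : (0 : ℝ) < k := by exact_mod_cast (by omega : 0 < k)
  have hkn' : (k : ℝ) + 1 ≤ n := by exact_mod_cast hkn
  exact tsum_exp_neg_sq_div_mul_exp_neg_sub_sq_div_le hβ hk (by linarith) (by linarith)
    (by linarith) x
end

section
/- Let (Z_n)_{n ≥ 0} be a Galton-Watson branching process with Z_0 = 1 whose offspring distribution has mean 1 and finite positive variance σ^2. Then n · P(Z_n > 0) → 2/σ^2 as n → ∞. -/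
open MeasureTheory ProbabilityTheory Filter Finset Topology Set
open scoped ENNReal

/-!
Conditioning on the first `n` generations shows that the extinction probabilities
`qₙ = P(Zₙ = 0)` are the iterates `qₙ = fⁿ(0)` of the offspring generating function `f`.
For the survival probabilities `uₙ = 1 - qₙ`, a second-order expansion of `f` at `1` gives
`uₙ₊₁ = uₙ - uₙ² D(uₙ)` with `D` continuous and positive on `[0, 1]` and `D(0) = σ²/2`.
Hence `uₙ ↓ 0`, so `1/uₙ₊₁ - 1/uₙ = D(uₙ)/(1 - uₙ D(uₙ)) → σ²/2`, and Cesàro averaging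
gives `1/(n uₙ) → σ²/2`.
-/

namespace GaltonWatson

/-- `(1 - v) ^ k = 1 - k v + v² · powRemainder k v`. -/
noncomputable def powRemainder (k : ℕ) (v : ℝ) : ℝ :=
  ∑ j ∈ range k, ∑ i ∈ range j, (1 - v) ^ i

theorem one_sub_pow_eq (k : ℕ) (v : ℝ) :
    (1 - v) ^ k = 1 - k * v + v ^ 2 * powRemainder k v := by
  induction k with
  | zero => simp [powRemainder]
  | succ k ih =>
    have hgeom := geom_sum_mul (1 - v) k
    simp only [powRemainder, sum_range_succ] at ih ⊢
    push_cast
    linear_combination ih + v * hgeom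

theorem powRemainder_nonneg (k : ℕ) {v : ℝ} (hv : v ≤ 1) : 0 ≤ powRemainder k v :=
  sum_nonneg fun _ _ => sum_nonneg fun _ _ => pow_nonneg (sub_nonneg.2 hv) _

theorem powRemainder_le_sq (k : ℕ) {v : ℝ} (hv : v ∈ Icc (0 : ℝ) 1) :
    powRemainder k v ≤ (k : ℝ) ^ 2 :=
  calc powRemainder k v ≤ ∑ _j ∈ range k, ∑ _i ∈ range k, (1 : ℝ) := by
        refine sum_le_sum fun j hj => ?_
        refine (sum_le_sum fun i _ => pow_le_one₀ (sub_nonneg.2 hv.2) (sub_le_self _ hv.1)).trans ?_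
        exact sum_le_sum_of_subset_of_nonneg (range_subset_range.2 (mem_range.1 hj).le)
          fun _ _ _ => zero_le_one
    _ = (k : ℝ) ^ 2 := by simp [sq]

theorem one_le_powRemainder {k : ℕ} (hk : 2 ≤ k) {v : ℝ} (hv : v ≤ 1) :
    1 ≤ powRemainder k v := by
  have h1 : ∑ i ∈ range 1, (1 - v) ^ i ≤ powRemainder k v :=
    single_le_sum (f := fun j => ∑ i ∈ range j, (1 - v) ^ i)
      (fun j _ => sum_nonneg fun i _ => pow_nonneg (sub_nonneg.2 hv) i) (mem_range.2 hk)
  simpa using h1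

theorem powRemainder_zero_right (k : ℕ) : powRemainder k 0 = k * (k - 1) / 2 := by
  induction k with
  | zero => simp [powRemainder]
  | succ k ih =>
    simp only [powRemainder, sum_range_succ, sub_zero, one_pow, sum_const, card_range,
      nsmul_eq_mul, mul_one] at ih ⊢
    rw [ih]; push_cast; ring

theorem continuous_powRemainder (k : ℕ) : Continuous (powRemainder k) := by
  unfold powRemainder; fun_prop

theorem integrable_of_abs_le {α : Type*} [MeasurableSpace α] [DiscreteMeasurableSpace α]
    {μ : Measure α} {g h : α → ℝ} (hh : Integrable h μ) (hgh : ∀ k, |g k| ≤ h k) :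
    Integrable g μ :=
  hh.mono' (Measurable.of_discrete).aestronglyMeasurable (ae_of_all _ hgh)

noncomputable def pgf (μ : Measure ℕ) (t : ℝ) : ℝ := ∫ k, t ^ k ∂μ

noncomputable def pgfRemainder (μ : Measure ℕ) (v : ℝ) : ℝ := ∫ k, powRemainder k v ∂μ

section

variable {μ : Measure ℕ}

theorem integrable_natCast_of_sq (hmom : Integrable (fun k : ℕ => (k : ℝ) ^ 2) μ) :
    Integrable (fun k : ℕ => (k : ℝ)) μ :=
  integrable_of_abs_le hmom fun k => by
    rw [Nat.abs_cast]; exact_mod_cast Nat.le_self_pow two_ne_zero k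

theorem integrable_powRemainder (hmom : Integrable (fun k : ℕ => (k : ℝ) ^ 2) μ) {v : ℝ}
    (hv : v ∈ Icc (0 : ℝ) 1) : Integrable (fun k => powRemainder k v) μ :=
  integrable_of_abs_le hmom fun k => by
    rw [abs_of_nonneg (powRemainder_nonneg k hv.2)]; exact powRemainder_le_sq k hv

variable [IsProbabilityMeasure μ]

theorem integrable_pow {t : ℝ} (ht : t ∈ Icc (0 : ℝ) 1) : Integrable (fun k : ℕ => t ^ k) μ :=
  integrable_of_abs_le (integrable_const (1 : ℝ)) fun k => by
    rw [abs_of_nonneg (pow_nonneg ht.1 k)]; exact pow_le_one₀ ht.1 ht.2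

theorem mapsTo_pgf_Icc : MapsTo (pgf μ) (Icc 0 1) (Icc 0 1) := fun t ht =>
  ⟨integral_nonneg fun k => pow_nonneg ht.1 k, by
    simpa [pgf] using integral_mono (integrable_pow (μ := μ) ht) (integrable_const 1)
      fun k => pow_le_one₀ ht.1 ht.2⟩

theorem pgf_lt_one (hmean : ∫ k, (k : ℝ) ∂μ ≠ 0) {t : ℝ} (ht : t ∈ Ico (0 : ℝ) 1) :
    pgf μ t < 1 := by
  have ht' : t ∈ Icc (0 : ℝ) 1 := Ico_subset_Icc_self ht
  refine (mapsTo_pgf_Icc ht').2.lt_of_ne fun h => hmean ?_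
  have hint : Integrable (fun k : ℕ => 1 - t ^ k) μ := (integrable_const 1).sub (integrable_pow ht')
  have hzero : ∫ k, (1 - t ^ k) ∂μ = 0 := by
    rw [integral_sub (integrable_const 1) (integrable_pow ht')]
    rw [← pgf, h]; simp
  rw [integral_eq_zero_iff_of_nonneg (fun k => sub_nonneg.2 (pow_le_one₀ ht.1 ht.2.le)) hint]
    at hzero
  refine integral_eq_zero_of_ae (hzero.mono fun k hk => ?_)
  simp only [Pi.zero_apply, Nat.cast_eq_zero] at hk ⊢
  by_contra hk0
  linarith [pow_lt_one₀ ht.1 ht.2 hk0]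

theorem pgf_one_sub (hmom : Integrable (fun k : ℕ => (k : ℝ) ^ 2) μ) {v : ℝ}
    (hv : v ∈ Icc (0 : ℝ) 1) :
    pgf μ (1 - v) = 1 - (∫ k, (k : ℝ) ∂μ) * v + v ^ 2 * pgfRemainder μ v := by
  have hk := integrable_natCast_of_sq hmom
  simp_rw [pgf, one_sub_pow_eq]
  rw [integral_add ((integrable_const 1).sub' (hk.mul_const v))
      ((integrable_powRemainder hmom hv).const_mul _),
    integral_sub (integrable_const 1) (hk.mul_const v), integral_mul_const, integral_const_mul]
  simp [pgfRemainder]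

omit [IsProbabilityMeasure μ] in
theorem continuousOn_pgfRemainder (hmom : Integrable (fun k : ℕ => (k : ℝ) ^ 2) μ) :
    ContinuousOn (pgfRemainder μ) (Icc 0 1) :=
  continuousOn_of_dominated (fun _ _ => (Measurable.of_discrete).aestronglyMeasurable)
    (fun v hv => ae_of_all _ fun k => by
      rw [Real.norm_eq_abs, abs_of_nonneg (powRemainder_nonneg k hv.2)]
      exact powRemainder_le_sq k hv)
    hmom (ae_of_all _ fun k => (continuous_powRemainder k).continuousOn)

theorem pgfRemainder_zero (hmom : Integrable (fun k : ℕ => (k : ℝ) ^ 2) μ)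
    (hmean : ∫ k, (k : ℝ) ∂μ = 1) :
    pgfRemainder μ 0 = (∫ k, ((k : ℝ) - 1) ^ 2 ∂μ) / 2 := by
  have hk := integrable_natCast_of_sq hmom
  have hexp : (fun k : ℕ => ((k : ℝ) - 1) ^ 2) = fun k => 2 * powRemainder k 0 - (k - 1) := by
    ext k; rw [powRemainder_zero_right]; ring
  rw [hexp, integral_sub ((integrable_powRemainder hmom (left_mem_Icc.2 zero_le_one)).const_mul 2)
    (hk.sub' (integrable_const 1)), integral_sub hk (integrable_const 1), integral_const_mul,
    hmean, ← pgfRemainder]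
  simp

theorem pgfRemainder_pos (hmom : Integrable (fun k : ℕ => (k : ℝ) ^ 2) μ)
    (hmean : ∫ k, (k : ℝ) ∂μ = 1) (hvar : ∫ k, ((k : ℝ) - 1) ^ 2 ∂μ ≠ 0) {v : ℝ}
    (hv : v ∈ Icc (0 : ℝ) 1) : 0 < pgfRemainder μ v := by
  refine (integral_nonneg fun k => powRemainder_nonneg k hv.2).lt_of_ne' fun h => hvar ?_
  rw [integral_eq_zero_iff_of_nonneg (fun k => powRemainder_nonneg k hv.2)
    (integrable_powRemainder hmom hv)] at h
  have hle : ∀ᵐ k : ℕ ∂μ, ((k : ℝ) - 1) ^ 2 = 1 - k := h.mono fun k hk => by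
    have : k < 2 := by
      by_contra! hk2
      have := one_le_powRemainder hk2 hv.2
      simp only [Pi.zero_apply] at hk
      linarith
    interval_cases k <;> norm_num
  rw [integral_congr_ae hle, integral_sub (integrable_const 1) (integrable_natCast_of_sq hmom),
    hmean]
  simp

end

theorem tendsto_nat_mul_of_tendsto_inv_sub_inv {u : ℕ → ℝ} {c : ℝ} (hc : c ≠ 0)
    (h : Tendsto (fun n => (u (n + 1))⁻¹ - (u n)⁻¹) atTop (𝓝 c)) :
    Tendsto (fun n : ℕ => n * u n) atTop (𝓝 c⁻¹) := by
  have hcesaro : Tendsto (fun n : ℕ => (n : ℝ)⁻¹ * ((u n)⁻¹ - (u 0)⁻¹)) atTop (𝓝 c) := by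
    simpa only [sum_range_sub (fun n => (u n)⁻¹)] using h.cesaro
  have hinv : Tendsto (fun n : ℕ => (u n)⁻¹ / n) atTop (𝓝 c) := by
    simpa [div_eq_inv_mul, mul_sub] using
      hcesaro.add (tendsto_inv_atTop_nhds_zero_nat.mul_const (u 0)⁻¹)
  simpa only [inv_div, div_inv_eq_mul] using hinv.inv₀ hc

section Recursion

variable {u : ℕ → ℝ} {D : ℝ → ℝ}

theorem tendsto_zero_of_sub_sq_mul (hu : ∀ n, u n ∈ Icc (0 : ℝ) 1)
    (hD : ContinuousOn D (Icc 0 1)) (hDpos : ∀ v ∈ Icc (0 : ℝ) 1, 0 < D v)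
    (hrec : ∀ n, u (n + 1) = u n - u n ^ 2 * D (u n)) : Tendsto u atTop (𝓝 0) := by
  have hanti : Antitone u := antitone_nat_of_succ_le fun n => by
    rw [hrec n]; nlinarith [hDpos _ (hu n), sq_nonneg (u n)]
  have hbdd : BddBelow (range u) := ⟨0, forall_mem_range.2 fun n => (hu n).1⟩
  set L := ⨅ n, u n
  have hL : Tendsto u atTop (𝓝 L) := tendsto_atTop_ciInf hanti hbdd
  have hLmem : L ∈ Icc (0 : ℝ) 1 := isClosed_Icc.mem_of_tendsto hL (Eventually.of_forall hu)
  have hDL : Tendsto (fun n => D (u n)) atTop (𝓝 (D L)) :=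
    (hD L hLmem).tendsto.comp (tendsto_nhdsWithin_iff.2 ⟨hL, Eventually.of_forall hu⟩)
  have hfix : L = L - L ^ 2 * D L :=
    tendsto_nhds_unique ((tendsto_add_atTop_iff_nat 1).2 hL)
      (by simpa only [← hrec] using hL.sub ((hL.pow 2).mul hDL))
  have : L ^ 2 * D L = 0 := by linarith
  rw [mul_eq_zero, or_iff_left (hDpos L hLmem).ne', pow_eq_zero_iff two_ne_zero] at this
  rwa [← this]

theorem tendsto_nat_mul_of_sub_sq_mul (hu : ∀ n, u n ∈ Ioc (0 : ℝ) 1)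
    (hD : ContinuousOn D (Icc 0 1)) (hDpos : ∀ v ∈ Icc (0 : ℝ) 1, 0 < D v)
    (hrec : ∀ n, u (n + 1) = u n - u n ^ 2 * D (u n)) :
    Tendsto (fun n : ℕ => n * u n) atTop (𝓝 (D 0)⁻¹) := by
  have hu' : ∀ n, u n ∈ Icc (0 : ℝ) 1 := fun n => Ioc_subset_Icc_self (hu n)
  have hu0 : Tendsto u atTop (𝓝[Icc 0 1] 0) :=
    tendsto_nhdsWithin_iff.2 ⟨tendsto_zero_of_sub_sq_mul hu' hD hDpos hrec,
      Eventually.of_forall hu'⟩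
  have hDu : Tendsto (fun n => D (u n)) atTop (𝓝 (D 0)) :=
    (hD 0 (left_mem_Icc.2 zero_le_one)).tendsto.comp hu0
  have hstep : ∀ n, (u (n + 1))⁻¹ - (u n)⁻¹ = D (u n) / (1 - u n * D (u n)) := fun n => by
    have hfac : u (n + 1) = u n * (1 - u n * D (u n)) := by rw [hrec n]; ring
    have hpos : 0 < 1 - u n * D (u n) := pos_of_mul_pos_right (hfac ▸ (hu (n + 1)).1) (hu n).1.le
    rw [hfac]; field_simp [(hu n).1.ne', hpos.ne']; ring
  refine tendsto_nat_mul_of_tendsto_inv_sub_inv (hDpos 0 (left_mem_Icc.2 zero_le_one)).ne' ?_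
  simp_rw [hstep]
  simpa [Pi.div_def] using
    hDu.div (((tendsto_nhdsWithin_iff.1 hu0).1.mul hDu).const_sub 1) (by simp)

end Recursion

theorem tendsto_nat_mul_one_sub_iterate_pgf {μ : Measure ℕ} [IsProbabilityMeasure μ]
    (hmom : Integrable (fun k : ℕ => (k : ℝ) ^ 2) μ) (hmean : ∫ k, (k : ℝ) ∂μ = 1)
    (hvar : 0 < ∫ k, ((k : ℝ) - 1) ^ 2 ∂μ) :
    Tendsto (fun n : ℕ => n * (1 - (pgf μ)^[n] 0)) atTop
      (𝓝 (2 / ∫ k, ((k : ℝ) - 1) ^ 2 ∂μ)) := by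
  set u : ℕ → ℝ := fun n => 1 - (pgf μ)^[n] 0
  have hsucc : ∀ n, u (n + 1) = 1 - pgf μ (1 - u n) := fun n => by
    simp only [u, Function.iterate_succ_apply', sub_sub_cancel]
  have hu : ∀ n, u n ∈ Ioc (0 : ℝ) 1 := fun n => by
    induction n with
    | zero => simp [u]
    | succ n ih =>
      have hmem : 1 - u n ∈ Ico (0 : ℝ) 1 := ⟨by linarith [ih.2], by linarith [ih.1]⟩
      have hlt := pgf_lt_one (μ := μ) (by simp [hmean]) hmem
      have hnonneg := (mapsTo_pgf_Icc (μ := μ) (Ico_subset_Icc_self hmem)).1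
      rw [hsucc]; exact ⟨by linarith, by linarith⟩
  have hrec : ∀ n, u (n + 1) = u n - u n ^ 2 * pgfRemainder μ (u n) := fun n => by
    rw [hsucc, pgf_one_sub hmom (Ioc_subset_Icc_self (hu n)), hmean]; ring
  have hlim := tendsto_nat_mul_of_sub_sq_mul hu (continuousOn_pgfRemainder hmom)
    (fun v hv => pgfRemainder_pos hmom hmean hvar.ne' hv) hrec
  rwa [pgfRemainder_zero hmom hmean, inv_div] at hlim

noncomputable def lpgf (μ : Measure ℕ) (s : ℝ≥0∞) : ℝ≥0∞ := ∫⁻ k, s ^ k ∂μ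

theorem lpgf_ofReal {μ : Measure ℕ} [IsProbabilityMeasure μ] {t : ℝ} (ht : t ∈ Icc (0 : ℝ) 1) :
    lpgf μ (ENNReal.ofReal t) = ENNReal.ofReal (pgf μ t) := by
  simp_rw [lpgf, ← ENNReal.ofReal_pow ht.1]
  exact (ofReal_integral_eq_lintegral_ofReal (integrable_pow ht)
    (ae_of_all _ fun k => pow_nonneg ht.1 k)).symm

theorem iterate_lpgf_zero {μ : Measure ℕ} [IsProbabilityMeasure μ] (n : ℕ) :
    (lpgf μ)^[n] 0 = ENNReal.ofReal ((pgf μ)^[n] 0) := by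
  induction n with
  | zero => simp
  | succ n ih =>
    rw [Function.iterate_succ_apply', ih,
      lpgf_ofReal ((mapsTo_pgf_Icc.iterate n) (left_mem_Icc.2 zero_le_one)),
      Function.iterate_succ_apply']

theorem measurable_sum_range {Ω M : Type*} {m : MeasurableSpace Ω} [AddCommMonoid M]
    [MeasurableSpace M] [MeasurableAdd₂ M] {N : Ω → ℕ} (hN : Measurable N) {X : ℕ → Ω → M}
    (hX : ∀ i, Measurable (X i)) : Measurable fun ω => ∑ i ∈ range (N ω), X i ω :=
  (measurable_from_prod_countable_left (f := fun p : Ω × ℕ => ∑ i ∈ range p.2, X i p.1)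
    fun k => Finset.measurable_sum (range k) fun i _ => hX i).comp (measurable_id.prodMk hN)

section Freezing

variable {Ω α : Type*} {m₁ m₂ : MeasurableSpace Ω} [mΩ : MeasurableSpace Ω] {P : Measure Ω}
  [Countable α] [MeasurableSpace α] [MeasurableSingletonClass α]

theorem lintegral_eq_tsum_setLIntegral_fiber {N : Ω → α} (hN : Measurable N) (F : Ω → ℝ≥0∞) :
    ∫⁻ ω, F ω ∂P = ∑' k, ∫⁻ ω in N ⁻¹' {k}, F ω ∂P := by
  rw [← lintegral_iUnion (fun k => hN (measurableSet_singleton k)) (pairwise_disjoint_fiber N),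
    ← preimage_iUnion, iUnion_of_singleton, preimage_univ, setLIntegral_univ]

theorem lintegral_comp_eq_lintegral_lintegral_of_indep (hm₁ : m₁ ≤ mΩ) (hm₂ : m₂ ≤ mΩ)
    (hind : Indep m₁ m₂ P) {N : Ω → α} (hN : Measurable[m₁] N) {Y : α → Ω → ℝ≥0∞}
    (hY : ∀ k, Measurable[m₂] (Y k)) :
    ∫⁻ ω, Y (N ω) ω ∂P = ∫⁻ ω, ∫⁻ ω', Y (N ω) ω' ∂P ∂P := by
  have hN' : Measurable N := hN.mono hm₁ le_rfl
  rw [lintegral_eq_tsum_setLIntegral_fiber hN', lintegral_eq_tsum_setLIntegral_fiber hN']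
  congr 1; ext k
  have hA : MeasurableSet[m₁] (N ⁻¹' {k}) := hN (measurableSet_singleton k)
  calc ∫⁻ ω in N ⁻¹' {k}, Y (N ω) ω ∂P
      = ∫⁻ ω, (N ⁻¹' {k}).indicator (fun _ => 1) ω * Y k ω ∂P := by
        rw [← lintegral_indicator (hm₁ _ hA)]
        congr 1; ext ω
        by_cases hω : N ω = k <;> simp [indicator, hω]
    _ = P (N ⁻¹' {k}) * ∫⁻ ω, Y k ω ∂P := by
        rw [lintegral_mul_eq_lintegral_mul_lintegral_of_independent_measurableSpace hm₁ hm₂ hind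
          (measurable_const.indicator hA) (hY k), lintegral_indicator_const (hm₁ _ hA), one_mul]
    _ = ∫⁻ ω in N ⁻¹' {k}, ∫⁻ ω', Y (N ω) ω' ∂P ∂P := by
        rw [setLIntegral_congr_fun (hm₁ _ hA) fun ω (hω : N ω = k) => by rw [hω],
          setLIntegral_const, mul_comm]

end Freezing

section Generations

variable {Ω : Type*} {ξ : ℕ → ℕ → Ω → ℕ}

abbrev generationSigma (ξ : ℕ → ℕ → Ω → ℕ) (s : Set ℕ) : MeasurableSpace Ω :=
  ⨆ p ∈ Prod.fst ⁻¹' s, MeasurableSpace.comap (ξ p.1 p.2) inferInstance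

theorem generationSigma_mono {s t : Set ℕ} (hst : s ⊆ t) :
    generationSigma ξ s ≤ generationSigma ξ t :=
  biSup_mono fun _ hp => hst hp

theorem measurable_generationSigma {s : Set ℕ} {n : ℕ} (hn : n ∈ s) (i : ℕ) :
    Measurable[generationSigma ξ s] (ξ n i) :=
  Measurable.of_comap_le (le_iSup₂ (f := fun p (_ : p ∈ Prod.fst ⁻¹' s) =>
    MeasurableSpace.comap (ξ p.1 p.2) inferInstance) (n, i) hn)

variable {Z : ℕ → Ω → ℕ}

theorem measurable_generationSigma_Iio (hZ0 : ∀ ω, Z 0 ω = 1)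
    (hZrec : ∀ n ω, Z (n + 1) ω = ∑ i ∈ range (Z n ω), ξ n i ω) (n : ℕ) :
    Measurable[generationSigma ξ (Set.Iio n)] (Z n) := by
  induction n with
  | zero => simp only [funext hZ0, measurable_const]
  | succ n ih =>
    rw [funext (hZrec n)]
    exact measurable_sum_range (ih.mono (generationSigma_mono (Iio_subset_Iio n.le_succ)) le_rfl)
      (measurable_generationSigma (Nat.lt_succ_self n))

variable [mΩ : MeasurableSpace Ω] {P : Measure Ω}

theorem generationSigma_le (hmeas : ∀ n i, Measurable (ξ n i)) (s : Set ℕ) :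
    generationSigma ξ s ≤ mΩ :=
  iSup₂_le fun p _ => (hmeas p.1 p.2).comap_le

theorem indep_generationSigma (hmeas : ∀ n i, Measurable (ξ n i))
    (hindep : iIndepFun (fun p : ℕ × ℕ => ξ p.1 p.2) P) {s t : Set ℕ} (hst : Disjoint s t) :
    Indep (generationSigma ξ s) (generationSigma ξ t) P :=
  indep_iSup_of_disjoint (m := fun p : ℕ × ℕ => MeasurableSpace.comap (ξ p.1 p.2) inferInstance)
    (fun p => (hmeas p.1 p.2).comap_le) hindep (hst.preimage _)

variable {μ : Measure ℕ}

theorem lintegral_pow_succ (hmeas : ∀ n i, Measurable (ξ n i))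
    (hindep : iIndepFun (fun p : ℕ × ℕ => ξ p.1 p.2) P) (hdist : ∀ n i, P.map (ξ n i) = μ)
    (hZ0 : ∀ ω, Z 0 ω = 1) (hZrec : ∀ n ω, Z (n + 1) ω = ∑ i ∈ range (Z n ω), ξ n i ω)
    (n : ℕ) (s : ℝ≥0∞) :
    ∫⁻ ω, s ^ Z (n + 1) ω ∂P = ∫⁻ ω, lpgf μ s ^ Z n ω ∂P := by
  set Y : ℕ → Ω → ℝ≥0∞ := fun k ω => ∏ i ∈ range k, s ^ ξ n i ω
  have hYmeas : ∀ k, Measurable[generationSigma ξ {n}] (Y k) := fun k =>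
    Finset.measurable_prod _ fun i _ =>
      Measurable.of_discrete.comp (measurable_generationSigma (mem_singleton n) i)
  have hrow : iIndepFun (fun i ω => s ^ ξ n i ω) P :=
    (hindep.precomp (g := Prod.mk n) (Prod.mk_right_injective n)).comp (fun _ k => s ^ k)
      fun _ => Measurable.of_discrete
  have hYint : ∀ k, ∫⁻ ω, Y k ω ∂P = lpgf μ s ^ k := fun k => by
    rw [lintegral_prod_eq_prod_lintegral_of_indepFun _ _ hrow
      fun i => Measurable.of_discrete.comp (hmeas n i)]
    simp_rw [← lintegral_map Measurable.of_discrete (hmeas n _), hdist]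
    simp [lpgf]
  calc ∫⁻ ω, s ^ Z (n + 1) ω ∂P = ∫⁻ ω, Y (Z n ω) ω ∂P := by
        simp_rw [Y, hZrec, prod_pow_eq_pow_sum]
    _ = ∫⁻ ω, ∫⁻ ω', Y (Z n ω) ω' ∂P ∂P :=
        lintegral_comp_eq_lintegral_lintegral_of_indep (generationSigma_le hmeas _)
          (generationSigma_le hmeas _)
          (indep_generationSigma hmeas hindep (s := Set.Iio n) (t := {n})
            (disjoint_singleton_right.2 (lt_irrefl n)))
          (measurable_generationSigma_Iio hZ0 hZrec n) hYmeas
    _ = ∫⁻ ω, lpgf μ s ^ Z n ω ∂P := by simp_rw [hYint]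

theorem lintegral_pow_eq_iterate_lpgf [IsProbabilityMeasure P]
    (hmeas : ∀ n i, Measurable (ξ n i))
    (hindep : iIndepFun (fun p : ℕ × ℕ => ξ p.1 p.2) P) (hdist : ∀ n i, P.map (ξ n i) = μ)
    (hZ0 : ∀ ω, Z 0 ω = 1) (hZrec : ∀ n ω, Z (n + 1) ω = ∑ i ∈ range (Z n ω), ξ n i ω)
    (n : ℕ) (s : ℝ≥0∞) : ∫⁻ ω, s ^ Z n ω ∂P = (lpgf μ)^[n] s := by
  induction n generalizing s with
  | zero => simp [hZ0]
  | succ n ih =>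
    rw [lintegral_pow_succ hmeas hindep hdist hZ0 hZrec, ih, Function.iterate_succ_apply]

theorem measure_eq_zero_eq_iterate_lpgf [IsProbabilityMeasure P]
    (hmeas : ∀ n i, Measurable (ξ n i))
    (hindep : iIndepFun (fun p : ℕ × ℕ => ξ p.1 p.2) P) (hdist : ∀ n i, P.map (ξ n i) = μ)
    (hZ0 : ∀ ω, Z 0 ω = 1) (hZrec : ∀ n ω, Z (n + 1) ω = ∑ i ∈ range (Z n ω), ξ n i ω)
    (n : ℕ) : P {ω | Z n ω = 0} = (lpgf μ)^[n] 0 := by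
  have hZ : Measurable (Z n) :=
    (measurable_generationSigma_Iio hZ0 hZrec n).mono (generationSigma_le hmeas _) le_rfl
  rw [← lintegral_pow_eq_iterate_lpgf hmeas hindep hdist hZ0 hZrec,
    ← lintegral_indicator_one (s := {ω | Z n ω = 0}) (hZ (measurableSet_singleton 0))]
  congr 1; ext ω
  by_cases h : Z n ω = 0 <;> simp [h]

theorem measure_pos_toReal_eq_one_sub_iterate_pgf [IsProbabilityMeasure P]
    [IsProbabilityMeasure μ] (hmeas : ∀ n i, Measurable (ξ n i))
    (hindep : iIndepFun (fun p : ℕ × ℕ => ξ p.1 p.2) P) (hdist : ∀ n i, P.map (ξ n i) = μ)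
    (hZ0 : ∀ ω, Z 0 ω = 1) (hZrec : ∀ n ω, Z (n + 1) ω = ∑ i ∈ range (Z n ω), ξ n i ω)
    (n : ℕ) : (P {ω | 0 < Z n ω}).toReal = 1 - (pgf μ)^[n] 0 := by
  have hA : MeasurableSet {ω | Z n ω = 0} :=
    (measurable_generationSigma_Iio hZ0 hZrec n).mono (generationSigma_le hmeas _) le_rfl
      (measurableSet_singleton 0)
  have hq : (pgf μ)^[n] 0 ∈ Icc (0 : ℝ) 1 :=
    (mapsTo_pgf_Icc.iterate n) (left_mem_Icc.2 zero_le_one)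
  have hcompl : {ω | 0 < Z n ω} = {ω | Z n ω = 0}ᶜ := by ext ω; simp [Nat.pos_iff_ne_zero]
  rw [hcompl, prob_compl_eq_one_sub hA,
    measure_eq_zero_eq_iterate_lpgf hmeas hindep hdist hZ0 hZrec, iterate_lpgf_zero,
    ENNReal.toReal_sub_of_le (ENNReal.ofReal_le_one.2 hq.2) ENNReal.one_ne_top,
    ENNReal.toReal_ofReal hq.1, ENNReal.toReal_one]

end Generations

end GaltonWatson

open GaltonWatson in
/-- Kolmogorov's estimate for critical Galton-Watson processes: if the offspring law has
mean `1` and finite positive variance `σ²`, then `n · P(Zₙ > 0) → 2/σ²`. -/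
theorem kolmogorov_survival_estimate
    {Ω : Type*} [MeasurableSpace Ω] (P : Measure Ω) [IsProbabilityMeasure P]
    (ξ : ℕ → ℕ → Ω → ℕ) (hmeas : ∀ n i, Measurable (ξ n i))
    (hindep : iIndepFun (fun p : ℕ × ℕ => ξ p.1 p.2) P)
    (μ : Measure ℕ) [IsProbabilityMeasure μ]
    (hdist : ∀ n i, Measure.map (ξ n i) P = μ)
    (hmom : Integrable (fun k : ℕ => (k : ℝ) ^ 2) μ)
    (hmean : ∫ k, (k : ℝ) ∂μ = 1)
    (σ2 : ℝ) (hσ2 : 0 < σ2)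
    (hvar : ∫ k, ((k : ℝ) - 1) ^ 2 ∂μ = σ2)
    (Z : ℕ → Ω → ℕ)
    (hZ0 : ∀ ω, Z 0 ω = 1)
    (hZrec : ∀ n ω, Z (n + 1) ω = ∑ i ∈ Finset.range (Z n ω), ξ n i ω) :
    Tendsto (fun n : ℕ => (n : ℝ) * (P {ω | 0 < Z n ω}).toReal) atTop (nhds (2 / σ2)) := by
  simp_rw [measure_pos_toReal_eq_one_sub_iterate_pgf hmeas hindep hdist hZ0 hZrec]
  subst hvar
  exact tendsto_nat_mul_one_sub_iterate_pgf hmom hmean hσ2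
end
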